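/- arXiv:1209.3298 — 6 statements merged into one kernel-verified Lean document; each statement's English description precedes it below -/
import Mathlib

section
/- Every nonnegative binary form is a sum of two squares: if F ∈ ℝ[x,y] is homogeneous of degree 2d and F(a,b) ≥ 0 for all (a,b) ∈ ℝ², then there exist polynomials G, H ∈ ℝ[x,y], each either zero or homogeneous of degree d, such that F = G² + H². -/
/-!
Dehomogenizing gives a nonnegative polynomial `f = F(x, 1)` of degree at most `2d`. A nonconstant
such `f` has a complex root `a + bi`, and `(x - a)^2 + b^2` divides `f` (for `b = 0` because a real
root of a nonnegative polynomial is a double root) with a nonnegative quotient. Since sums of two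
squares are closed under multiplication, induction on the degree gives `f = p^2 + q^2`. The leading
terms of `p^2` and `q^2` cannot cancel, so `p` and `q` have degree at most `d`, and homogenizing them
to degree `d` gives `F = G^2 + H^2`.
-/

namespace Polynomial

theorem natDegree_sq_add_sq {R : Type*} [CommRing R] [LinearOrder R] [IsStrictOrderedRing R]
    (p q : R[X]) : (p ^ 2 + q ^ 2).natDegree = 2 * max p.natDegree q.natDegree := by
  rcases eq_or_ne p 0 with rfl | hp
  · simp [natDegree_pow]
  rcases eq_or_ne q 0 with rfl | hq
  · simp [natDegree_pow]
  have hlc : (p ^ 2).leadingCoeff + (q ^ 2).leadingCoeff ≠ 0 := by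
    rw [leadingCoeff_pow, leadingCoeff_pow]
    exact (add_pos_of_pos_of_nonneg (sq_pos_of_ne_zero (leadingCoeff_ne_zero.2 hp))
      (sq_nonneg _)).ne'
  apply natDegree_eq_of_degree_eq_some
  rw [degree_add_eq_of_leadingCoeff_add_ne_zero hlc, degree_pow, degree_pow,
    degree_eq_natDegree hp, degree_eq_natDegree hq, ← Nat.mul_max_mul_left]
  norm_cast

theorem sq_X_sub_C_dvd_of_isRoot_of_nonneg {f : ℝ[X]} (hf : ∀ x, 0 ≤ f.eval x) {a : ℝ}
    (ha : f.IsRoot a) : (X - C a) ^ 2 ∣ f := by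
  rcases eq_or_ne f 0 with rfl | hf0
  · exact dvd_zero _
  have hmin : IsLocalMin (fun x ↦ f.eval x) a :=
    .of_forall fun x ↦ by simpa [ha.eq_zero] using hf x
  rw [← le_rootMultiplicity_iff hf0, Nat.succ_le_iff, one_lt_rootMultiplicity_iff_isRoot hf0]
  exact ⟨ha, hmin.hasDerivAt_eq_zero (f.hasDerivAt a)⟩

theorem exists_sq_add_sq_dvd_of_nonneg {f : ℝ[X]} (hf : ∀ x, 0 ≤ f.eval x)
    (hdeg : 0 < f.degree) : ∃ a b : ℝ, (X - C a) ^ 2 + C b ^ 2 ∣ f := by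
  obtain ⟨z, hz⟩ := IsAlgClosed.exists_aeval_eq_zero ℂ f hdeg.ne'
  refine ⟨z.re, z.im, ?_⟩
  by_cases him : z.im = 0
  · have hz_re : f.IsRoot z.re := by
      rwa [← Complex.re_add_im z, him, Complex.ofReal_zero, zero_mul, add_zero,
        ← Complex.coe_algebraMap, aeval_algebraMap_apply_eq_algebraMap_eval,
        Complex.coe_algebraMap, Complex.ofReal_eq_zero] at hz
    simpa [him] using sq_X_sub_C_dvd_of_isRoot_of_nonneg hf hz_re
  · convert quadratic_dvd_of_aeval_eq_zero_im_ne_zero f hz him using 1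
    rw [Complex.sq_norm, Complex.normSq_apply]
    simp only [map_add, map_mul, map_ofNat]
    ring

theorem eval_nonneg_of_sq_add_sq_mul {a b : ℝ} {h : ℝ[X]}
    (hf : ∀ x, 0 ≤ (((X - C a) ^ 2 + C b ^ 2) * h).eval x) (x : ℝ) : 0 ≤ h.eval x := by
  have hne : ∀ y ∈ ({a}ᶜ : Set ℝ), 0 ≤ h.eval y := fun y hy ↦ by
    have hy : y - a ≠ 0 := sub_ne_zero.2 hy
    have hfy := hf y
    simp only [eval_mul, eval_add, eval_pow, eval_sub, eval_X, eval_C] at hfy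
    exact nonneg_of_mul_nonneg_right hfy (by positivity)
  have hclosed : IsClosed {y | 0 ≤ h.eval y} := isClosed_le continuous_const h.continuous
  exact hclosed.closure_subset_iff.2 hne ((dense_compl_singleton a).closure_eq ▸ Set.mem_univ x)

theorem exists_eq_sq_add_sq_of_nonneg {f : ℝ[X]} (hf : ∀ x, 0 ≤ f.eval x) :
    ∃ p q : ℝ[X], f = p ^ 2 + q ^ 2 := by
  induction hn : f.natDegree using Nat.strong_induction_on generalizing f with
  | _ n ih =>
  rcases Nat.eq_zero_or_pos n with rfl | hn_pos
  · rw [eq_C_of_natDegree_eq_zero hn] at hf ⊢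
    refine ⟨C √(f.coeff 0), 0, ?_⟩
    rw [← C_pow, Real.sq_sqrt (by simpa using hf 0)]
    ring
  obtain ⟨a, b, h, rfl⟩ :=
    exists_sq_add_sq_dvd_of_nonneg hf (natDegree_pos_iff_degree_pos.1 (hn ▸ hn_pos))
  have hs : ((X - C a) ^ 2 + C b ^ 2).natDegree = 2 := by
    simp [natDegree_sq_add_sq]
  have hh : h ≠ 0 := by rintro rfl; simp at hn; omega
  have hdeg : h.natDegree < n := by
    rw [← hn, natDegree_mul (by rintro h0; simp [h0] at hs) hh, hs]; omega
  obtain ⟨p, q, rfl⟩ := ih _ hdeg (eval_nonneg_of_sq_add_sq_mul hf) rfl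
  exact ⟨_, _, sq_add_sq_mul_sq_add_sq⟩

end Polynomial

namespace MvPolynomial

theorem natDegree_aeval_le_totalDegree {σ R : Type*} [CommSemiring R] {g : σ → Polynomial R}
    (hg : ∀ i, (g i).natDegree ≤ 1) (F : MvPolynomial σ R) :
    (aeval g F).natDegree ≤ F.totalDegree := by
  conv_lhs => rw [F.as_sum]
  rw [map_sum]
  refine Polynomial.natDegree_sum_le_of_forall_le _ _ fun m hm ↦ ?_
  rw [aeval_monomial, ← Polynomial.C_eq_algebraMap]
  refine (Polynomial.natDegree_C_mul_le _ _).trans <| (Polynomial.natDegree_prod_le _ _).trans ?_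
  refine (Finset.sum_le_sum fun i _ ↦ Polynomial.natDegree_pow_le_of_le (m i) (hg i)).trans ?_
  simp only [mul_one]
  exact le_totalDegree hm

end MvPolynomial

open MvPolynomial

/-- Every nonnegative binary form of degree `2d` is a sum of two squares of
forms of degree `d` (each of which may be zero). -/
theorem nonneg_binary_form_sum_two_squares (d : ℕ) (F : MvPolynomial (Fin 2) ℝ)
    (hF : F.IsHomogeneous (2 * d))
    (hpos : ∀ x : Fin 2 → ℝ, 0 ≤ eval x F) :
    ∃ G H : MvPolynomial (Fin 2) ℝ,
      (G = 0 ∨ G.IsHomogeneous d) ∧ (H = 0 ∨ H.IsHomogeneous d) ∧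
      F = G ^ 2 + H ^ 2 := by
  set f := aeval (![Polynomial.X, 1] : Fin 2 → Polynomial ℝ) F
  have hfF : f.homogenize (2 * d) = F := Polynomial.homogenize_eq_of_isHomogeneous hF rfl
  have hdeg : f.natDegree ≤ 2 * d :=
    (natDegree_aeval_le_totalDegree (fun i ↦ by fin_cases i <;> simp) F).trans hF.totalDegree_le
  have hf : ∀ t, 0 ≤ f.eval t := fun t ↦ by
    simpa [← hfF, Polynomial.eval_homogenize hdeg] using hpos ![t, 1]
  obtain ⟨p, q, hpq⟩ := Polynomial.exists_eq_sq_add_sq_of_nonneg hf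
  obtain ⟨hp, hq⟩ : p.natDegree ≤ d ∧ q.natDegree ≤ d := by
    rw [hpq, Polynomial.natDegree_sq_add_sq] at hdeg; omega
  refine ⟨p.homogenize d, q.homogenize d, .inr p.isHomogeneous_homogenize,
    .inr q.isHomogeneous_homogenize, ?_⟩
  rw [← hfF, hpq, two_mul, sq, sq, Polynomial.homogenize_add, Polynomial.homogenize_mul _ _ hp hp,
    Polynomial.homogenize_mul _ _ hq hq, sq, sq]
end

section
/- A nonzero nonnegative quadratic form in n real variables is an extreme point of the cone P_{n,2} of nonnegative quadratic forms if and only if it is the square of a real linear form: for nonzero homogeneous F ∈ ℝ[x₁,…,xₙ] of degree 2 with F(X) ≥ 0 for all X ∈ ℝⁿ, F is extreme in P_{n,2} if and only if there exists α = (α₁,…,αₙ) ∈ ℝⁿ with F = (α₁x₁ + ⋯ + αₙxₙ)². -/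
/-! By Cauchy–Schwarz, the polar form `B` of a nonnegative quadratic form `Q` satisfies
`B(v, x)² ≤ 4 Q(v) Q(x)`. So when `Q(v) > 0`, the square `B(v, ·)² / (4 Q(v))` of a linear form
lies below `Q` and agrees with it at `v`; if `Q` is extreme, splitting `Q` as this square plus the
remainder shows that the square is some `c • Q`, and evaluating at `v` gives `c = 1`.

Conversely, if `ℓ² = Q₁ + Q₂` with `Qᵢ ≥ 0`, then each `Qᵢ` vanishes on `ker ℓ`. By
Cauchy–Schwarz, a zero of `Qᵢ` is orthogonal to everything under the polar form of `Qᵢ`, so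
`Qᵢ(y + t v) = t² Qᵢ(v)` for `y ∈ ker ℓ`: each `Qᵢ` is a multiple of `ℓ²`. -/

open MvPolynomial

theorem Finsupp.exists_eq_single_add_single_of_degree_eq_two {σ : Type*} {d : σ →₀ ℕ}
    (hd : d.degree = 2) : ∃ a b, d = Finsupp.single a 1 + Finsupp.single b 1 := by
  classical
  have hcard : Multiset.card (Finsupp.toMultiset d) = 2 := by
    rw [Finsupp.card_toMultiset, ← hd]; rfl
  obtain ⟨a, b, hab⟩ := Multiset.card_eq_two.1 hcard
  refine ⟨a, b, ?_⟩
  rw [← Finsupp.toMultiset_toFinsupp d, hab, Multiset.insert_eq_cons, ← Multiset.singleton_add,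
    Multiset.toFinsupp_add, Multiset.toFinsupp_singleton, Multiset.toFinsupp_singleton]

namespace QuadraticMap

variable {K M : Type*} [Field K] [LinearOrder K] [IsStrictOrderedRing K]
  [AddCommGroup M] [Module K M] {Q : QuadraticForm K M}

theorem sq_polar_le_of_nonneg (hQ : ∀ x, 0 ≤ Q x) (x y : M) :
    polar Q x y ^ 2 ≤ 4 * Q x * Q y := by
  have h := LinearMap.BilinForm.apply_sq_le_of_symm (polarBilin Q)
    (fun z => by simpa [polar_self] using hQ z) ⟨fun z w => polar_comm Q z w⟩ x y
  simp only [polarBilin_apply_apply, polar_self, nsmul_eq_mul, Nat.cast_ofNat] at h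
  linarith

theorem polar_eq_zero_of_nonneg_of_eq_zero (hQ : ∀ x, 0 ≤ Q x) {y : M} (hy : Q y = 0) (x : M) :
    polar Q y x = 0 := by
  have h := sq_polar_le_of_nonneg hQ y x
  rw [hy, mul_zero, zero_mul] at h
  exact pow_eq_zero_iff two_ne_zero |>.1 (le_antisymm h (sq_nonneg _))

theorem sq_polar_div_le_of_nonneg (hQ : ∀ x, 0 ≤ Q x) (v x : M) :
    polar Q v x ^ 2 / (4 * Q v) ≤ Q x := by
  rcases (hQ v).eq_or_lt with hv | hv
  · rw [← hv, mul_zero, div_zero]; exact hQ x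
  · rw [div_le_iff₀ (by positivity)]
    linarith [sq_polar_le_of_nonneg hQ v x]

theorem exists_eq_mul_sq_of_ker_le (hQ : ∀ x, 0 ≤ Q x) (ℓ : M →ₗ[K] K)
    (hker : ∀ x, ℓ x = 0 → Q x = 0) : ∃ c, 0 ≤ c ∧ ∀ x, Q x = c * ℓ x ^ 2 := by
  by_cases hℓ : ∀ v, ℓ v = 0
  · exact ⟨0, le_rfl, fun x => by rw [hker x (hℓ x), zero_mul]⟩
  obtain ⟨v, hv⟩ := not_forall.1 hℓ
  refine ⟨Q v / ℓ v ^ 2, div_nonneg (hQ v) (sq_nonneg _), fun x => ?_⟩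
  set t := ℓ x / ℓ v
  have hy : Q (x - t • v) = 0 := hker _ (by simp [t, hv])
  calc Q x = Q ((x - t • v) + t • v) := by rw [sub_add_cancel]
    _ = t ^ 2 * Q v := by
      rw [QuadraticMap.map_add Q, hy, polar_eq_zero_of_nonneg_of_eq_zero hQ hy,
        QuadraticMap.map_smul, smul_eq_mul]
      ring
    _ = Q v / ℓ v ^ 2 * ℓ x ^ 2 := by simp only [t]; field_simp

end QuadraticMap

namespace MvPolynomial

variable {σ R : Type*} [CommRing R]

theorem IsHomogeneous.exists_quadraticForm_eval_eq {F : MvPolynomial σ R}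
    (hF : F.IsHomogeneous 2) : ∃ Q : QuadraticForm R (σ → R), ∀ x, Q x = eval x F := by
  rw [F.as_sum]
  refine Finset.sum_induction _ (fun G => ∃ Q : QuadraticForm R (σ → R), ∀ x, Q x = eval x G)
    (fun _ _ ⟨Q₁, h₁⟩ ⟨Q₂, h₂⟩ => ⟨Q₁ + Q₂, fun x => by simp [h₁, h₂]⟩) ⟨0, by simp⟩
    fun d hd => ?_
  have hd2 : d.degree = 2 := by
    rw [Finsupp.degree_eq_weight_one]; exact hF (mem_support_iff.1 hd)
  obtain ⟨a, b, rfl⟩ := Finsupp.exists_eq_single_add_single_of_degree_eq_two hd2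
  refine ⟨coeff (Finsupp.single a 1 + Finsupp.single b 1) F •
    QuadraticMap.linMulLin (LinearMap.proj a) (LinearMap.proj b), fun x => ?_⟩
  simp [eval_monomial, Finsupp.prod_add_index', pow_add]

theorem exists_eval_sum_C_mul_X_eq [Fintype σ] (f : (σ → R) →ₗ[R] R) :
    ∃ α : σ → R, ∀ x, eval x (∑ i, C (α i) * X i) = f x := by
  classical
  exact ⟨fun i => f fun j => if i = j then 1 else 0, fun x => by
    simp [f.pi_apply_eq_sum_univ x, mul_comm]⟩

theorem isHomogeneous_sum_C_mul_X_sq [Fintype σ] (α : σ → R) :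
    ((∑ i, C (α i) * X i) ^ 2).IsHomogeneous 2 :=
  (IsHomogeneous.sum _ _ 1 fun i _ => (isHomogeneous_X R i).C_mul (α i)).pow 2

variable [Fintype σ]

def IsExtremeNonnegQuadratic (F : MvPolynomial σ ℝ) : Prop :=
  ∀ F₁ F₂ : MvPolynomial σ ℝ, F₁.IsHomogeneous 2 → F₂.IsHomogeneous 2 →
    (∀ x, 0 ≤ eval x F₁) → (∀ x, 0 ≤ eval x F₂) → F = F₁ + F₂ →
    ∃ c₁ c₂ : ℝ, 0 ≤ c₁ ∧ 0 ≤ c₂ ∧ F₁ = c₁ • F ∧ F₂ = c₂ • F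

open QuadraticMap in
theorem IsExtremeNonnegQuadratic.exists_eq_sq {F : MvPolynomial σ ℝ}
    (hext : IsExtremeNonnegQuadratic F) (hF0 : F ≠ 0) (hF : F.IsHomogeneous 2)
    (hpos : ∀ x, 0 ≤ eval x F) : ∃ α : σ → ℝ, F = (∑ i, C (α i) * X i) ^ 2 := by
  obtain ⟨Q, hQ⟩ := hF.exists_quadraticForm_eval_eq
  have hQ0 : ∀ x, 0 ≤ Q x := fun x => hQ x ▸ hpos x
  obtain ⟨v, hv⟩ : ∃ v, 0 < Q v := by
    by_contra! h
    exact hF0 (funext fun x => by simp [← hQ, le_antisymm (h x) (hQ0 x)])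
  obtain ⟨α, hα⟩ := exists_eval_sum_C_mul_X_eq ((2 * √(Q v))⁻¹ • polarBilin Q v)
  set G := (∑ i, C (α i) * X i) ^ 2
  have hG : ∀ x, eval x G = polar Q v x ^ 2 / (4 * Q v) := fun x => by
    simp only [G, map_pow, hα, LinearMap.smul_apply, polarBilin_apply_apply, smul_eq_mul]
    rw [mul_pow, inv_pow, mul_pow, Real.sq_sqrt hv.le]
    ring
  obtain ⟨c, -, -, -, hGc, -⟩ := hext G (F - G) (isHomogeneous_sum_C_mul_X_sq α)
    (hF.sub (isHomogeneous_sum_C_mul_X_sq α)) (fun x => hG x ▸ by positivity)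
    (fun x => by rw [map_sub, hG, ← hQ, sub_nonneg]; exact sq_polar_div_le_of_nonneg hQ0 v x)
    (by ring)
  have hc : c = 1 := by
    have hcv := congrArg (eval v) hGc
    rw [hG, smul_eval, ← hQ, polar_self, nsmul_eq_mul, Nat.cast_ofNat] at hcv
    field_simp at hcv
    linarith
  exact ⟨α, by rw [hc, one_smul] at hGc; exact hGc.symm⟩

theorem IsHomogeneous.exists_eq_smul_sq_of_nonneg {G : MvPolynomial σ ℝ}
    (hG : G.IsHomogeneous 2) (hpos : ∀ x, 0 ≤ eval x G) (α : σ → ℝ)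
    (hker : ∀ x, ∑ i, α i * x i = 0 → eval x G = 0) :
    ∃ c : ℝ, 0 ≤ c ∧ G = c • (∑ i, C (α i) * X i) ^ 2 := by
  obtain ⟨Q, hQ⟩ := hG.exists_quadraticForm_eval_eq
  let ℓ : (σ → ℝ) →ₗ[ℝ] ℝ := ∑ i, α i • LinearMap.proj i
  obtain ⟨c, hc, hQc⟩ := QuadraticMap.exists_eq_mul_sq_of_ker_le (fun x => hQ x ▸ hpos x) ℓ
    fun x hx => (hQ x).trans (hker x (by simpa [ℓ] using hx))
  exact ⟨c, hc, MvPolynomial.funext fun x => by rw [smul_eval, ← hQ, hQc]; simp [ℓ]⟩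

theorem isExtremeNonnegQuadratic_sum_C_mul_X_sq (α : σ → ℝ) :
    IsExtremeNonnegQuadratic ((∑ i, C (α i) * X i) ^ 2) := by
  intro F₁ F₂ h₁ h₂ hp₁ hp₂ hsum
  have hker : ∀ x, ∑ i, α i * x i = 0 → eval x F₁ = 0 ∧ eval x F₂ = 0 := fun x hx => by
    have : eval x F₁ + eval x F₂ = 0 := by simp [← map_add, ← hsum, hx]
    constructor <;> linarith [hp₁ x, hp₂ x]
  obtain ⟨c₁, hc₁, rfl⟩ := h₁.exists_eq_smul_sq_of_nonneg hp₁ α fun x hx => (hker x hx).1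
  obtain ⟨c₂, hc₂, rfl⟩ := h₂.exists_eq_smul_sq_of_nonneg hp₂ α fun x hx => (hker x hx).2
  exact ⟨c₁, c₂, hc₁, hc₂, rfl, rfl⟩

end MvPolynomial

/-- A nonzero nonnegative quadratic form is an extreme point of the cone of
nonnegative quadratic forms iff it is the square of a real linear form. -/
theorem quadratic_extreme_iff_square_of_linear (n : ℕ)
    (F : MvPolynomial (Fin n) ℝ) (hF0 : F ≠ 0)
    (hF : F.IsHomogeneous 2)
    (hpos : ∀ x : Fin n → ℝ, 0 ≤ eval x F) :
    (∀ F₁ F₂ : MvPolynomial (Fin n) ℝ,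
      F₁.IsHomogeneous 2 → F₂.IsHomogeneous 2 →
      (∀ x : Fin n → ℝ, 0 ≤ eval x F₁) → (∀ x : Fin n → ℝ, 0 ≤ eval x F₂) →
      F = F₁ + F₂ →
      ∃ c₁ c₂ : ℝ, 0 ≤ c₁ ∧ 0 ≤ c₂ ∧ F₁ = c₁ • F ∧ F₂ = c₂ • F) ↔
    ∃ α : Fin n → ℝ, F = (∑ i, C (α i) * X i) ^ 2 := by
  refine ⟨fun hext => IsExtremeNonnegQuadratic.exists_eq_sq hext hF0 hF hpos, ?_⟩
  rintro ⟨α, rfl⟩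
  exact isExtremeNonnegQuadratic_sum_C_mul_X_sq α
end

section
/- If every complex root of a nonconstant polynomial A ∈ ℂ[X] has strictly positive imaginary part, then every complex root of its derivative A′ also has strictly positive imaginary part. -/
open Polynomial

theorem Polynomial.mem_of_isRoot_derivative_of_convex {P : ℂ[X]} (hP : 0 < P.degree)
    {s : Set ℂ} (hs : Convex ℝ s) (hroots : ∀ w, P.IsRoot w → w ∈ s)
    {z : ℂ} (hz : P.derivative.IsRoot z) : z ∈ s := by
  rw [eq_centerMass_of_eval_derivative_eq_zero hP hz]
  refine hs.centerMass_mem (fun w _ ↦ derivRootWeight_nonneg P z w)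
    (sum_derivRootWeight_pos hP z) fun w hw ↦ hroots w ?_
  exact isRoot_of_mem_roots (Multiset.mem_toFinset.mp hw)

/-- If every root of a nonconstant complex polynomial has strictly positive
imaginary part, so does every root of its derivative (Gauss–Lucas). -/
theorem derivative_roots_im_pos (A : Polynomial ℂ) (hA : 0 < A.natDegree)
    (h : ∀ α : ℂ, A.IsRoot α → 0 < α.im) :
    ∀ β : ℂ, (Polynomial.derivative A).IsRoot β → 0 < β.im := fun _ hβ ↦
  mem_of_isRoot_derivative_of_convex (natDegree_pos_iff_degree_pos.mp hA)
    (convex_halfSpace_im_gt 0) h hβ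
end

section
/- (Hermite–Biehler type lemma) Let d ≥ 2 and let A = ∏_{i=1}^{d} (X − α⁽ⁱ⁾) ∈ ℂ[X] be a monic polynomial whose roots satisfy Im(α⁽ⁱ⁾)·Im(α⁽ʲ⁾) > 0 for all i, j (all imaginary parts are nonzero and of the same sign). Write A = G + i·H where G, H ∈ ℝ[X] are the real polynomials formed by the real parts and the imaginary parts of the coefficients of A respectively. Then G and H each have only real roots, i.e., both G and H split over ℝ. -/
/-!
Write `Ā = G - i H` for `A` with conjugated coefficients, so that `Ā = ∏ (X - ᾱᵢ)`. Since all
`αᵢ` lie in one open half-plane, a point `z` off the real axis is either strictly closer to every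
`αᵢ` than to `ᾱᵢ` or strictly farther from every one, hence `|A(z)| ≠ |Ā(z)|`. At a root of `G`
both sides equal `|H(z)|`, and at a root of `H` both equal `|G(z)|`; so all complex roots of `G`
and `H` are real.
-/

open Polynomial ComplexConjugate

theorem Finset.prod_lt_prod_of_nonempty_of_nonneg {ι R : Type*} [CommSemiring R] [PartialOrder R]
    [IsStrictOrderedRing R] {f g : ι → R} {s : Finset ι} (hf : ∀ i ∈ s, 0 ≤ f i)
    (hfg : ∀ i ∈ s, f i < g i) (hs : s.Nonempty) : ∏ i ∈ s, f i < ∏ i ∈ s, g i := by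
  induction hs using Finset.Nonempty.cons_induction with
  | singleton i => simpa using hfg i (by simp)
  | cons i s hi hs ih =>
    simp only [Finset.prod_cons]
    simp only [Finset.mem_cons, forall_eq_or_imp] at hf hfg
    exact mul_lt_mul'' hfg.1 (ih hf.2 hfg.2) hf.1 (Finset.prod_nonneg hf.2)

namespace Complex

theorem norm_sub_lt_norm_sub_conj {z w : ℂ} (h : 0 < z.im * w.im) : ‖z - w‖ < ‖z - conj w‖ := by
  rw [← sq_lt_sq₀ (norm_nonneg _) (norm_nonneg _), Complex.sq_norm, Complex.sq_norm, normSq_apply,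
    normSq_apply]
  simp only [sub_re, sub_im, conj_re, conj_im]
  linarith

theorem prod_norm_sub_lt_prod_norm_sub_conj {ι : Type*} [Fintype ι] [Nonempty ι] {α : ι → ℂ}
    {z : ℂ} (h : ∀ i, 0 < z.im * (α i).im) : ∏ i, ‖z - α i‖ < ∏ i, ‖z - conj (α i)‖ :=
  Finset.prod_lt_prod_of_nonempty_of_nonneg (fun _ _ ↦ norm_nonneg _)
    (fun i _ ↦ norm_sub_lt_norm_sub_conj (h i)) Finset.univ_nonempty

theorem prod_norm_sub_ne_prod_norm_sub_conj {ι : Type*} [Fintype ι] [Nonempty ι] {α : ι → ℂ}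
    (hα : ∀ i j, 0 < (α i).im * (α j).im) {z : ℂ} (hz : z.im ≠ 0) :
    ∏ i, ‖z - α i‖ ≠ ∏ i, ‖z - conj (α i)‖ := by
  obtain ⟨i₀⟩ := ‹Nonempty ι›
  have hα₀ : (α i₀).im ≠ 0 := fun h ↦ by simpa [h] using hα i₀ i₀
  -- the sign of `z.im * (α i).im` does not depend on `i`
  rcases (mul_ne_zero hz hα₀).lt_or_gt with hneg | hpos
  · refine (ne_of_lt ?_).symm
    have := prod_norm_sub_lt_prod_norm_sub_conj (z := conj z) (α := α) fun i ↦ by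
      simp only [conj_im]; nlinarith [mul_pos (neg_pos.2 hneg) (hα i₀ i), sq_nonneg (α i₀).im]
    have hswap (w : ℂ) : ‖conj z - w‖ = ‖z - conj w‖ := by rw [← norm_conj, map_sub, conj_conj]
    simpa only [hswap, conj_conj] using this
  · exact (prod_norm_sub_lt_prod_norm_sub_conj fun i ↦ by
      nlinarith [mul_pos hpos (hα i₀ i), sq_nonneg (α i₀).im]).ne

end Complex

theorem Polynomial.splits_of_forall_isRoot_map_im_eq_zero {p : ℝ[X]}
    (h : ∀ z : ℂ, (p.map (algebraMap ℝ ℂ)).IsRoot z → z.im = 0) : p.Splits :=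
  (IsAlgClosed.splits _).of_splits_map (algebraMap ℝ ℂ) fun z hz ↦
    ⟨z.re, Complex.ext (by simp) (by simp [h z (isRoot_of_mem_roots hz)])⟩

theorem Polynomial.map_conj_map_ofReal (p : ℝ[X]) :
    (p.map (algebraMap ℝ ℂ)).map conj = p.map (algebraMap ℝ ℂ) := by
  ext n; simp

/-- Hermite–Biehler type lemma: if all the roots of a monic complex polynomial
`A` of degree `d ≥ 2` have imaginary parts of the same (nonzero) sign, and
`A = G + i H` with `G, H` real, then `G` and `H` split over `ℝ`. -/
theorem hermite_biehler (d : ℕ) (hd : 2 ≤ d) (α : Fin d → ℂ)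
    (hα : ∀ i j : Fin d, 0 < (α i).im * (α j).im)
    (A : Polynomial ℂ) (hA : A = ∏ i, (X - C (α i)))
    (G H : Polynomial ℝ)
    (hGH : A = G.map (algebraMap ℝ ℂ) + C Complex.I * H.map (algebraMap ℝ ℂ)) :
    (G.map (RingHom.id ℝ)).Splits ∧ (H.map (RingHom.id ℝ)).Splits := by
  have : Nonempty (Fin d) := ⟨⟨0, by omega⟩⟩
  have hA_conj : A.map conj =
      G.map (algebraMap ℝ ℂ) - C Complex.I * H.map (algebraMap ℝ ℂ) := by
    simp [hGH, map_conj_map_ofReal, sub_eq_add_neg]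
  have him (z : ℂ) (h : ‖A.eval z‖ = ‖(A.map conj).eval z‖) : z.im = 0 := by
    by_contra hz
    refine Complex.prod_norm_sub_ne_prod_norm_sub_conj hα hz ?_
    simpa [hA, Polynomial.map_prod, eval_prod] using h
  rw [map_id, map_id]
  constructor <;> refine splits_of_forall_isRoot_map_im_eq_zero fun z hz ↦ him z ?_ <;>
    rw [hA_conj, hGH] <;> simp [hz.eq_zero]
end

section
/- The Carathéodory number of the cone of nonnegative binary forms is 2: for every d ≥ 1 and every homogeneous F ∈ ℝ[x,y] of degree 2d with F(a,b) ≥ 0 for all (a,b) ∈ ℝ², there exist G, H ∈ ℝ[x,y], each either zero or homogeneous of degree d and a product of real linear forms, such that F = G² + H². In other words, every nonnegative binary form is a sum of at most two extreme points of P_{2,2d}. -/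
/-!
Dehomogenize: `F` is the degree-`2d` homogenization of `f(t) = F(t, 1)`, and `f ≥ 0` on `ℝ`.
Every real root of `f` is a minimum, hence a double root, so `f = s² f₀` with `s` split over `ℝ`
and `f₀ > 0`. The complex roots of `f₀` pair off as `z, z̄` with `Im z > 0`, so
`f₀ = c ∏ |t - z|² = |q(t)|² = g(t)² + h(t)²` where `q = √c ∏ (X - z) = g + i h`.
Because every root of `q` lies in the upper half-plane, `|q̄(w)| < |q(w)|` on the lower
half-plane; there `g(w) = 0` or `h(w) = 0` would force `|q̄(w)| = |q(w)|`, so `g` and `h` have only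
real roots (Hermite–Biehler). Finally `F = G² + H²`, where `G` and `H` are the degree-`d`
homogenizations of `s g` and `s h`, i.e. products of `d` real linear forms.
-/

open Complex ComplexConjugate

theorem Complex.norm_sub_sub_mul_I_lt_norm_sub_add_mul_I {w : ℂ} (hw : w.im < 0) (a : ℝ) {b : ℝ}
    (hb : 0 < b) : ‖w - (a - b * I)‖ < ‖w - (a + b * I)‖ := by
  refine lt_of_pow_lt_pow_left₀ 2 (norm_nonneg _) ?_
  simp only [Complex.sq_norm, normSq_apply, sub_re, ofReal_re, mul_re, I_re, mul_zero, ofReal_im,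
    I_im, mul_one, sub_self, sub_zero, sub_im, mul_im, add_zero, zero_sub, sub_neg_eq_add, add_re,
    add_im, zero_add, add_lt_add_iff_left]
  nlinarith [mul_pos (neg_pos.mpr hw) hb]

namespace Polynomial

theorem exists_eq_X_sub_C_sq_mul_of_nonneg {f : ℝ[X]} (hf : ∀ t, 0 ≤ f.eval t) {r : ℝ}
    (hr : f.IsRoot r) : ∃ q : ℝ[X], f = (X - C r) ^ 2 * q ∧ ∀ t, 0 ≤ q.eval t := by
  obtain rfl | hf0 := eq_or_ne f 0
  · exact ⟨0, by simp, by simp⟩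
  have hmin : IsLocalMin (fun t => f.eval t) r :=
    Filter.Eventually.of_forall fun t => by simpa [hr.eq_zero] using hf t
  have hr' : f.derivative.IsRoot r := by simpa [Polynomial.deriv] using hmin.deriv_eq_zero
  obtain ⟨q, rfl⟩ := (le_rootMultiplicity_iff hf0).mp
    ((one_lt_rootMultiplicity_iff_isRoot hf0).mpr ⟨hr, hr'⟩)
  refine ⟨q, rfl, fun t => ?_⟩
  have hoff : ({r}ᶜ : Set ℝ) ⊆ {t | 0 ≤ q.eval t} := fun t ht => by
    have hpos : 0 < ((X - C r) ^ 2).eval t := by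
      simpa using pow_pos (abs_pos.mpr (sub_ne_zero.mpr ht)) 2
    exact nonneg_of_mul_nonneg_right (by simpa only [eval_mul] using hf t) hpos
  have := (isClosed_le continuous_const q.continuous).closure_subset_iff.mpr hoff
  rw [(dense_compl_singleton r).closure_eq] at this
  exact this (Set.mem_univ t)

theorem exists_splits_sq_mul_pos_of_nonneg {f : ℝ[X]} (hf : ∀ t, 0 ≤ f.eval t) (hf0 : f ≠ 0) :
    ∃ s f₀ : ℝ[X], s.Splits ∧ f = s ^ 2 * f₀ ∧ ∀ t, 0 < f₀.eval t := by
  induction hn : f.natDegree using Nat.strong_induction_on generalizing f with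
  | _ n ih =>
  by_cases hroot : ∃ r, f.IsRoot r
  · obtain ⟨r, hr⟩ := hroot
    obtain ⟨q, rfl, hq⟩ := exists_eq_X_sub_C_sq_mul_of_nonneg hf hr
    have hq0 : q ≠ 0 := right_ne_zero_of_mul hf0
    have hlt : q.natDegree < n := by
      rw [← hn, natDegree_mul (pow_ne_zero 2 (X_sub_C_ne_zero r)) hq0]
      simp
    obtain ⟨s, f₀, hs, rfl, hf₀⟩ := ih _ hlt hq hq0 rfl
    exact ⟨(X - C r) * s, f₀, (Splits.X_sub_C r).mul hs, by ring, hf₀⟩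
  · push Not at hroot
    exact ⟨1, f, Splits.one, by ring, fun t => (hf t).lt_of_ne' (hroot t)⟩

theorem exists_eq_C_sq_of_natDegree_eq_zero {f : ℝ[X]} (hdeg : f.natDegree = 0)
    (hf : ∀ t, 0 < f.eval t) : ∃ c ≠ 0, f = C c ^ 2 := by
  refine ⟨√(f.eval 0), (Real.sqrt_pos.mpr (hf 0)).ne', ?_⟩
  rw [← map_pow, Real.sq_sqrt (hf 0).le, ← coeff_zero_eq_eval_zero]
  exact eq_C_of_natDegree_eq_zero hdeg

theorem exists_aeval_eq_zero_im_pos {f : ℝ[X]} (hf : ∀ t, f.eval t ≠ 0)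
    (hdeg : 0 < f.natDegree) : ∃ z : ℂ, aeval z f = 0 ∧ 0 < z.im := by
  obtain ⟨z, hz⟩ := IsAlgClosed.exists_aeval_eq_zero ℂ f
    (by rw [degree_eq_natDegree (ne_zero_of_natDegree_gt hdeg)]; exact_mod_cast hdeg.ne')
  rcases lt_trichotomy z.im 0 with h | h | h
  · exact ⟨conj z, by rw [aeval_conj, hz, map_zero], by simpa using h⟩
  · have hre : (z.re : ℂ) = z := Complex.ext (by simp) (by simp [h])
    rw [← hre, ← Complex.coe_algebraMap, aeval_algebraMap_apply_eq_algebraMap_eval,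
      Complex.coe_algebraMap, ofReal_eq_zero] at hz
    exact absurd hz (hf z.re)
  · exact ⟨z, hz, h⟩

theorem splits_of_forall_im_neg_aeval_ne_zero {p : ℝ[X]}
    (hp : ∀ w : ℂ, w.im < 0 → aeval w p ≠ 0) : p.Splits := by
  refine Splits.of_splits_map (algebraMap ℝ ℂ) (IsAlgClosed.splits _) fun z hz => ?_
  have hz : aeval z p = 0 := by
    rw [aeval_def, eval₂_eq_eval_map]
    exact (mem_roots'.mp hz).2
  have him : z.im = 0 := by
    rcases lt_trichotomy z.im 0 with h | h | h
    · exact absurd hz (hp z h)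
    · exact h
    · exact absurd (by rw [aeval_conj, hz, map_zero]) (hp (conj z) (by simpa using h))
  exact ⟨z.re, Complex.ext (by simp) (by simp [him])⟩

/-- Writing `q = g + i h`, this says `|q̄(w)| < |q(w)|` on the open lower half-plane, where `q̄` is
`q` with conjugated coefficients. It holds when `q` is nonconstant with all of its roots in the
open upper half-plane. -/
def IsStablePair (g h : ℝ[X]) : Prop :=
  ∀ w : ℂ, w.im < 0 → ‖aeval w g - I * aeval w h‖ < ‖aeval w g + I * aeval w h‖

namespace IsStablePair

variable {g h : ℝ[X]}

theorem splits_left (hgh : IsStablePair g h) : g.Splits :=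
  splits_of_forall_im_neg_aeval_ne_zero fun w hw hg => by
    simpa [hg] using (hgh w hw).ne

theorem splits_right (hgh : IsStablePair g h) : h.Splits :=
  splits_of_forall_im_neg_aeval_ne_zero fun w hw hh => by
    simpa [hh] using (hgh w hw).ne

end IsStablePair

def IsWeaklyStablePair (g h : ℝ[X]) : Prop :=
  ∀ w : ℂ, w.im < 0 → aeval w g + I * aeval w h ≠ 0 ∧
    ‖aeval w g - I * aeval w h‖ ≤ ‖aeval w g + I * aeval w h‖

theorem IsStablePair.isWeaklyStablePair {g h : ℝ[X]} (hgh : IsStablePair g h) :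
    IsWeaklyStablePair g h := fun w hw =>
  ⟨norm_pos_iff.mp ((norm_nonneg _).trans_lt (hgh w hw)), (hgh w hw).le⟩

theorem isWeaklyStablePair_C {c : ℝ} (hc : c ≠ 0) : IsWeaklyStablePair (C c) 0 := fun w _ => by
  simp [hc]

/-- The new pair is `g + i h` multiplied by `X - (a + b i)`. -/
theorem IsWeaklyStablePair.isStablePair_mul_X_sub {g h : ℝ[X]} (hgh : IsWeaklyStablePair g h)
    (a : ℝ) {b : ℝ} (hb : 0 < b) :
    IsStablePair (g * (X - C a) + C b * h) (h * (X - C a) - C b * g) := by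
  intro w hw
  obtain ⟨hne, hle⟩ := hgh w hw
  have hplus : aeval w (g * (X - C a) + C b * h) + I * aeval w (h * (X - C a) - C b * g)
      = (aeval w g + I * aeval w h) * (w - (a + b * I)) := by
    simp only [map_add, map_sub, map_mul, aeval_X, aeval_C, Complex.coe_algebraMap]
    linear_combination b * aeval w h * I_sq
  have hminus : aeval w (g * (X - C a) + C b * h) - I * aeval w (h * (X - C a) - C b * g)
      = (aeval w g - I * aeval w h) * (w - (a - b * I)) := by
    simp only [map_add, map_sub, map_mul, aeval_X, aeval_C, Complex.coe_algebraMap]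
    linear_combination b * aeval w h * I_sq
  have hpos := norm_pos_iff.mpr hne
  rw [hplus, hminus, norm_mul, norm_mul]
  calc ‖aeval w g - I * aeval w h‖ * ‖w - (a - b * I)‖
      ≤ ‖aeval w g + I * aeval w h‖ * ‖w - (a - b * I)‖ := by gcongr
    _ < ‖aeval w g + I * aeval w h‖ * ‖w - (a + b * I)‖ := by
      gcongr
      exact norm_sub_sub_mul_I_lt_norm_sub_add_mul_I hw a hb

theorem exists_isStablePair_of_pos {f : ℝ[X]} (hf : ∀ t, 0 < f.eval t)
    (hdeg : 0 < f.natDegree) : ∃ g h : ℝ[X], IsStablePair g h ∧ f = g ^ 2 + h ^ 2 := by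
  induction hn : f.natDegree using Nat.strong_induction_on generalizing f with
  | _ n ih =>
  obtain ⟨z, hz, him⟩ := exists_aeval_eq_zero_im_pos (fun t => (hf t).ne') hdeg
  obtain ⟨q, rfl⟩ := quadratic_dvd_of_aeval_eq_zero_im_ne_zero f hz him.ne'
  have hQ : X ^ 2 - C (2 * z.re) * X + C (‖z‖ ^ 2) = (X - C z.re) ^ 2 + C z.im ^ 2 := by
    simp only [Complex.sq_norm, Complex.normSq_apply, map_add, map_mul, map_ofNat]
    ring
  rw [hQ] at hf hn ⊢
  have hQpos : ∀ t, 0 < ((X - C z.re) ^ 2 + C z.im ^ 2).eval t := fun t => by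
    simpa using add_pos_of_nonneg_of_pos (sq_nonneg (t - z.re)) (pow_pos him 2)
  have hQdeg : ((X - C z.re) ^ 2 + C z.im ^ 2).natDegree = 2 := by
    rw [← map_pow, natDegree_add_C, natDegree_pow, natDegree_X_sub_C]
  have hq : ∀ t, 0 < q.eval t := fun t =>
    pos_of_mul_pos_right (by simpa only [eval_mul] using hf t) (hQpos t).le
  obtain ⟨g, h, hgh, rfl⟩ : ∃ g h : ℝ[X], IsWeaklyStablePair g h ∧ q = g ^ 2 + h ^ 2 := by
    rcases q.natDegree.eq_zero_or_pos with hq₀ | hq₀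
    · obtain ⟨c, hc, rfl⟩ := exists_eq_C_sq_of_natDegree_eq_zero hq₀ hq
      exact ⟨C c, 0, isWeaklyStablePair_C hc, by ring⟩
    · have hlt : q.natDegree < n := by
        rw [← hn, natDegree_mul (ne_zero_of_natDegree_gt (hQdeg ▸ two_pos))
          (ne_zero_of_natDegree_gt hq₀), hQdeg]
        omega
      obtain ⟨g, h, hgh, rfl⟩ := ih _ hlt hq hq₀ rfl
      exact ⟨g, h, hgh.isWeaklyStablePair, rfl⟩
  exact ⟨_, _, hgh.isStablePair_mul_X_sub z.re him, by ring⟩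

theorem exists_splits_sq_add_sq_of_nonneg {f : ℝ[X]} (hf : ∀ t, 0 ≤ f.eval t) :
    ∃ g h : ℝ[X], g.Splits ∧ h.Splits ∧ f = g ^ 2 + h ^ 2 := by
  obtain rfl | hf0 := eq_or_ne f 0
  · exact ⟨0, 0, Splits.zero, Splits.zero, by ring⟩
  obtain ⟨s, f₀, hs, rfl, hf₀⟩ := exists_splits_sq_mul_pos_of_nonneg hf hf0
  rcases f₀.natDegree.eq_zero_or_pos with hdeg | hdeg
  · obtain ⟨c, -, rfl⟩ := exists_eq_C_sq_of_natDegree_eq_zero hdeg hf₀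
    exact ⟨s * C c, 0, hs.mul (Splits.C c), Splits.zero, by ring⟩
  · obtain ⟨g, h, hgh, rfl⟩ := exists_isStablePair_of_pos hf₀ hdeg
    exact ⟨s * g, s * h, hs.mul hgh.splits_left, hs.mul hgh.splits_right, by ring⟩

theorem two_mul_max_natDegree_le_natDegree_sq_add_sq {R : Type*} [CommRing R] [LinearOrder R]
    [IsStrictOrderedRing R] (g h : R[X]) :
    2 * max g.natDegree h.natDegree ≤ (g ^ 2 + h ^ 2).natDegree := by
  wlog hhg : h.natDegree ≤ g.natDegree generalizing g h
  · simpa [max_comm, add_comm] using this h g (le_of_not_ge hhg)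
  obtain rfl | hg := eq_or_ne g 0
  · simp_all
  rw [max_eq_left hhg]
  refine le_natDegree_of_ne_zero ?_
  rw [coeff_add, coeff_pow_of_natDegree_le le_rfl, coeff_pow_of_natDegree_le hhg]
  have := leadingCoeff_ne_zero.mpr hg
  positivity

theorem natDegree_aeval_X_one_le {R : Type*} [CommSemiring R] {F : MvPolynomial (Fin 2) R}
    {n : ℕ} (hF : F.IsHomogeneous n) : (MvPolynomial.aeval ![(X : R[X]), 1] F).natDegree ≤ n := by
  rw [F.as_sum, map_sum]
  refine natDegree_sum_le_of_forall_le _ _ fun m hm => ?_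
  rw [MvPolynomial.aeval_monomial, ← C_eq_algebraMap]
  refine (natDegree_C_mul_le _ _).trans ?_
  obtain rfl : m.weight 1 = n := hF (by simpa using hm)
  simp only [Finsupp.prod_fintype, pow_zero, implies_true, Fin.prod_univ_two, Matrix.cons_val_zero,
    Matrix.cons_val_one, Matrix.cons_val_fin_one, one_pow, mul_one, Finsupp.weight_apply,
    Pi.one_apply, smul_eq_mul, Finsupp.sum_fintype, Fin.sum_univ_two]
  exact (natDegree_X_pow_le (R := R) _).trans (Nat.le_add_right _ _)

theorem Splits.exists_eq_C_mul_X_add_C_mul {K : Type*} [Field K] {p : K[X]} (hp : p.Splits)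
    {n : ℕ} (hpn : p.natDegree ≤ n + 1) :
    ∃ u v : K, ∃ q : K[X], p = (C u * X + C v) * q ∧ q.Splits ∧ q.natDegree ≤ n := by
  by_cases hdeg : p.degree = 0
  · exact ⟨0, 1, p, by simp, hp, (natDegree_eq_of_degree_eq_some hdeg).trans_le n.zero_le⟩
  obtain ⟨r, hr⟩ := hp.exists_eval_eq_zero hdeg
  have hpr : (X - C r) * (p /ₘ (X - C r)) = p := mul_divByMonic_eq_iff_isRoot.mpr hr
  refine ⟨1, -r, p /ₘ (X - C r), by simpa [← sub_eq_add_neg] using hpr.symm, ?_, ?_⟩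
  · obtain rfl | hp0 := eq_or_ne p 0
    · simp
    · exact hp.of_dvd hp0 (Dvd.intro_left _ hpr)
  · rw [natDegree_divByMonic _ (monic_X_sub_C r), natDegree_X_sub_C]
    omega

theorem homogenize_C_mul_X_add_C {R : Type*} [CommSemiring R] (u v : R) :
    (C u * X + C v).homogenize 1 = .C u * .X 0 + .C v * .X 1 := by
  simp

theorem exists_homogenize_eq_prod_of_splits {K : Type*} [Field K] {n : ℕ} (hn : 1 ≤ n)
    {p : K[X]} (hp : p.Splits) (hpn : p.natDegree ≤ n) :
    ∃ a b : Fin n → K, p.homogenize n = ∏ i, (.C (a i) * .X 0 + .C (b i) * .X 1) := by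
  induction n, hn using Nat.le_induction generalizing p with
  | base =>
    refine ⟨fun _ => p.coeff 1, fun _ => p.coeff 0, ?_⟩
    rw [Fin.prod_univ_one, ← homogenize_C_mul_X_add_C, ← eq_X_add_C_of_natDegree_le_one hpn]
  | succ n hn ih =>
    obtain ⟨u, v, q, rfl, hq, hqn⟩ := hp.exists_eq_C_mul_X_add_C_mul hpn
    obtain ⟨a, b, hab⟩ := ih hq hqn
    refine ⟨Fin.cons u a, Fin.cons v b, ?_⟩
    have hmul := homogenize_mul (C u * X + C v) q natDegree_linear_le hqn
    rw [add_comm 1 n] at hmul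
    rw [hmul, homogenize_C_mul_X_add_C, hab, Fin.prod_univ_succ]
    simp

end Polynomial

open MvPolynomial

/-- Carathéodory number of nonnegative binary forms is 2: every nonnegative
binary form of degree `2d` is a sum of two squares of degree-`d` forms, each
of which is zero or a product of real linear forms (i.e. an extreme point). -/
theorem caratheodory_binary_forms (d : ℕ) (hd : 1 ≤ d)
    (F : MvPolynomial (Fin 2) ℝ)
    (hF : F.IsHomogeneous (2 * d))
    (hpos : ∀ x : Fin 2 → ℝ, 0 ≤ eval x F) :
    ∃ G H : MvPolynomial (Fin 2) ℝ,
      (G = 0 ∨ (G.IsHomogeneous d ∧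
        ∃ a b : Fin d → ℝ, G = ∏ i, (C (a i) * X 0 + C (b i) * X 1))) ∧
      (H = 0 ∨ (H.IsHomogeneous d ∧
        ∃ a b : Fin d → ℝ, H = ∏ i, (C (a i) * X 0 + C (b i) * X 1))) ∧
      F = G ^ 2 + H ^ 2 := by
  set f := aeval ![(Polynomial.X : Polynomial ℝ), 1] F
  have hfF : f.homogenize (2 * d) = F := Polynomial.homogenize_eq_of_isHomogeneous hF rfl
  have hfd : f.natDegree ≤ 2 * d := Polynomial.natDegree_aeval_X_one_le hF
  have hf : ∀ t, 0 ≤ f.eval t := fun t => by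
    simpa [← hfF, Polynomial.eval_homogenize hfd] using hpos ![t, 1]
  obtain ⟨g, h, hg, hh, hfgh⟩ := Polynomial.exists_splits_sq_add_sq_of_nonneg hf
  have hdeg := Polynomial.two_mul_max_natDegree_le_natDegree_sq_add_sq g h
  rw [← hfgh] at hdeg
  have hgd : g.natDegree ≤ d := by omega
  have hhd : h.natDegree ≤ d := by omega
  obtain ⟨a, b, hG⟩ := Polynomial.exists_homogenize_eq_prod_of_splits hd hg hgd
  obtain ⟨a', b', hH⟩ := Polynomial.exists_homogenize_eq_prod_of_splits hd hh hhd
  refine ⟨g.homogenize d, h.homogenize d, Or.inr ⟨g.isHomogeneous_homogenize, a, b, hG⟩,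
    Or.inr ⟨h.isHomogeneous_homogenize, a', b', hH⟩, ?_⟩
  rw [← hfF, hfgh, Polynomial.homogenize_add, two_mul, sq, sq, sq, sq,
    Polynomial.homogenize_mul _ _ hgd hgd, Polynomial.homogenize_mul _ _ hhd hhd]
end

section
/- For every d ≥ 2, the perfect square (x^d + y^d)² is a nonnegative binary form of degree 2d that is NOT an extreme point of the cone P_{2,2d}: there exist F₁, F₂ ∈ P_{2,2d} with (x^d + y^d)² = F₁ + F₂ such that neither F₁ nor F₂ is a nonnegative scalar multiple of (x^d + y^d)². -/
open MvPolynomial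

/-!
With `d = n + 1`, the square splits as
`(x^d + y^d)^2 = (x y^n + x^n y)^2 + (x^2 - y^2) ((x^2)^n - (y^2)^n)`.
The second summand is nonnegative because `t ↦ t^n` is monotone on `[0, ∞)`, so both of its
factors have the sign of `x^2 - y^2`. For `n ≥ 1` the first summand vanishes at `(1, 0)` and the
second at `(1, 1)`, while `(x^d + y^d)^2` vanishes at neither and neither summand is zero;
so neither summand is a multiple of `(x^d + y^d)^2`.
-/

namespace MvPolynomial

variable {σ R : Type*}

lemma sq_X_pow_succ_add_X_pow_succ [CommRing R] (i j : σ) (n : ℕ) :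
    (X i ^ (n + 1) + X j ^ (n + 1) : MvPolynomial σ R) ^ 2 =
      (X i * X j ^ n + X i ^ n * X j) ^ 2 +
        (X i ^ 2 - X j ^ 2) * ((X i ^ 2) ^ n - (X j ^ 2) ^ n) := by
  ring

lemma isHomogeneous_X_pow_add_X_pow [CommSemiring R] (i j : σ) (n : ℕ) :
    (X i ^ n + X j ^ n : MvPolynomial σ R).IsHomogeneous n :=
  (isHomogeneous_X_pow i n).add (isHomogeneous_X_pow j n)

lemma isHomogeneous_X_mul_X_pow_add_X_pow_mul_X [CommSemiring R] (i j : σ) (n : ℕ) :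
    (X i * X j ^ n + X i ^ n * X j : MvPolynomial σ R).IsHomogeneous (n + 1) :=
  (add_comm 1 n ▸ (isHomogeneous_X R i).mul (isHomogeneous_X_pow j n)).add
    ((isHomogeneous_X_pow i n).mul (isHomogeneous_X R j))

lemma isHomogeneous_sq_sub_sq_mul_pow_sub_pow [CommRing R] (i j : σ) (n : ℕ) :
    ((X i ^ 2 - X j ^ 2) * ((X i ^ 2) ^ n - (X j ^ 2) ^ n) :
      MvPolynomial σ R).IsHomogeneous (2 * (n + 1)) := by
  have hi := isHomogeneous_X_pow (R := R) i 2
  have hj := isHomogeneous_X_pow (R := R) j 2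
  convert (hi.sub hj).mul ((hi.pow n).sub (hj.pow n)) using 1
  ring

lemma eval_sq_sub_sq_mul_pow_sub_pow_nonneg [CommRing R] [LinearOrder R] [IsStrictOrderedRing R]
    (i j : σ) (n : ℕ) (x : σ → R) :
    0 ≤ eval x ((X i ^ 2 - X j ^ 2) * ((X i ^ 2) ^ n - (X j ^ 2) ^ n)) := by
  simp only [eval_mul, eval_sub, eval_pow, eval_X]
  exact (monotoneOn_id.monovaryOn pow_left_monotoneOn).sub_mul_sub_nonneg
    (sq_nonneg (x j)) (sq_nonneg (x i))

lemma not_exists_eq_smul_of_eval_eq_zero [CommRing R] [NoZeroDivisors R]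
    {G F : MvPolynomial σ R} {x y : σ → R} (hGx : eval x G = 0) (hFx : eval x F ≠ 0)
    (hGy : eval y G ≠ 0) : ¬ ∃ c : R, G = c • F := by
  rintro ⟨c, rfl⟩
  have hc : c = 0 := by simpa [smul_eval, hFx] using hGx
  simp [hc] at hGy

end MvPolynomial

/-- For `d ≥ 2`, the perfect square `(x^d + y^d)²` is a nonnegative binary
form of degree `2d` which is not an extreme point of the cone of nonnegative
binary forms. -/
theorem perfect_square_not_extreme (d : ℕ) (hd : 2 ≤ d) :
    ((X 0 ^ d + X 1 ^ d : MvPolynomial (Fin 2) ℝ) ^ 2).IsHomogeneous (2 * d) ∧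
    (∀ x : Fin 2 → ℝ, 0 ≤ eval x ((X 0 ^ d + X 1 ^ d : MvPolynomial (Fin 2) ℝ) ^ 2)) ∧
    ∃ F₁ F₂ : MvPolynomial (Fin 2) ℝ,
      F₁.IsHomogeneous (2 * d) ∧ (∀ x : Fin 2 → ℝ, 0 ≤ eval x F₁) ∧
      F₂.IsHomogeneous (2 * d) ∧ (∀ x : Fin 2 → ℝ, 0 ≤ eval x F₂) ∧
      (X 0 ^ d + X 1 ^ d : MvPolynomial (Fin 2) ℝ) ^ 2 = F₁ + F₂ ∧
      (¬ ∃ c : ℝ, 0 ≤ c ∧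
        F₁ = c • ((X 0 ^ d + X 1 ^ d : MvPolynomial (Fin 2) ℝ) ^ 2)) ∧
      (¬ ∃ c : ℝ, 0 ≤ c ∧
        F₂ = c • ((X 0 ^ d + X 1 ^ d : MvPolynomial (Fin 2) ℝ) ^ 2)) := by
  obtain ⟨n, rfl⟩ : ∃ n, d = n + 1 := ⟨d - 1, by omega⟩
  have hn : n ≠ 0 := by omega
  have h₁ := not_exists_eq_smul_of_eval_eq_zero
    (G := (X 0 * X 1 ^ n + X 0 ^ n * X 1 : MvPolynomial (Fin 2) ℝ) ^ 2)
    (F := (X 0 ^ (n + 1) + X 1 ^ (n + 1)) ^ 2)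
    (x := ![1, 0]) (y := ![1, 1]) (by simp [hn]) (by simp) (by norm_num)
  have h₂ := not_exists_eq_smul_of_eval_eq_zero
    (G := ((X 0 ^ 2 - X 1 ^ 2) * ((X 0 ^ 2) ^ n - (X 1 ^ 2) ^ n) : MvPolynomial (Fin 2) ℝ))
    (F := (X 0 ^ (n + 1) + X 1 ^ (n + 1)) ^ 2)
    (x := ![1, 1]) (y := ![1, 0]) (by simp) (by norm_num) (by simp [hn])
  refine ⟨mul_comm (n + 1) 2 ▸ (isHomogeneous_X_pow_add_X_pow 0 1 (n + 1)).pow 2,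
    fun x => by rw [eval_pow]; exact sq_nonneg _, _, _,
    mul_comm (n + 1) 2 ▸ (isHomogeneous_X_mul_X_pow_add_X_pow_mul_X 0 1 n).pow 2,
    fun x => by rw [eval_pow]; exact sq_nonneg _,
    isHomogeneous_sq_sub_sq_mul_pow_sub_pow 0 1 n,
    eval_sq_sub_sq_mul_pow_sub_pow_nonneg 0 1 n, sq_X_pow_succ_add_X_pow_succ 0 1 n,
    fun ⟨c, _, h⟩ => h₁ ⟨c, h⟩, fun ⟨c, _, h⟩ => h₂ ⟨c, h⟩⟩
end
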